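/- arXiv:1002.0362 — 2 statements merged into one kernel-verified Lean document; each statement's English description precedes it below -/
import Mathlib

section
/- (Verma–Kaur) For every integer k ≥ 3 and every complex number s with Re(s) ≥ q_2·k + 2, the k-th derivative of the Riemann zeta function does not vanish at s, i.e. iteratedDeriv k riemannZeta s ≠ 0. -/
/-!
For `σ = Re s > 1` we have `ζ⁽ᵏ⁾(s) = (-1)ᵏ ∑ₙ (log n)ᵏ n⁻ˢ`, and the term `n = 2` dominates the
sum of the absolute values of all the others. Write `(log n)ᵏ n^(-σ) = g(n)ᵏ n^(-(σ - q₂ k))` with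
`g x = log x / x ^ q₂`: the exponent `q₂` is chosen so that `g 3 = g 2`, `g` decreases on `[3, ∞)`,
and `σ - q₂ k ≥ 2`, so the `n`-th term is at most `(g n / g 2)³ (2 / n)²` times the second one.
From `q₂ ≥ 9/8` (which reduces to `2¹⁹ ≤ 3¹²`) one gets `2 ^ q₂ ≥ 2.174`, hence
`g 4 ≤ 0.92 g 2`, `g 6 ≤ 0.751 g 2`, `g 8 ≤ 0.635 g 2`, and these ratios for `n ≥ 3` sum to less
than `0.992`.
-/

/-- `q M = log(log M / log(M+1)) / log(M/(M+1))`, the slope of the `M`-th critical line. -/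
noncomputable def q (M : ℕ) : ℝ :=
  Real.log (Real.log M / Real.log ((M : ℝ) + 1)) / Real.log ((M : ℝ) / ((M : ℝ) + 1))

open Real Finset LSeries

theorem log_pow_mul_rpow_neg_eq {x : ℝ} (hx : 0 < x) (a σ : ℝ) (k : ℕ) :
    log x ^ k * x ^ (-σ) = (log x / x ^ a) ^ k * x ^ (-(σ - a * k)) := by
  rw [div_pow, ← rpow_natCast (x ^ a), ← rpow_mul hx.le, div_eq_mul_inv, mul_assoc,
    ← rpow_neg hx.le, ← rpow_add hx]
  ring_nf

theorem rpow_neg_le_four_div_sq {x c : ℝ} (hx : 2 ≤ x) (hc : 2 ≤ c) :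
    x ^ (-c) ≤ 2 ^ (-c) * (4 / x ^ 2) := by
  have hx0 : 0 < x := by linarith
  calc x ^ (-c) = 2 ^ (-c) * (x / 2) ^ (-c) := by
        rw [← mul_rpow zero_le_two (by positivity), mul_div_cancel₀ x two_ne_zero]
    _ ≤ 2 ^ (-c) * (x / 2) ^ (-2 : ℝ) := by
        gcongr; linarith
    _ = 2 ^ (-c) * (4 / x ^ 2) := by
        rw [rpow_neg (by positivity : (0 : ℝ) ≤ x / 2), rpow_two]
        field_simp
        norm_num

theorem log_pow_mul_rpow_neg_le {a σ x u : ℝ} {k : ℕ} (hk : 3 ≤ k) (hσ : a * k + 2 ≤ σ)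
    (hx : 2 ≤ x) (hu0 : 0 ≤ u) (hu1 : u ≤ 1) (h : log x / x ^ a ≤ u * (log 2 / 2 ^ a)) :
    log x ^ k * x ^ (-σ) ≤ u ^ 3 * (4 / x ^ 2) * (log 2 ^ k * 2 ^ (-σ)) := by
  have hx0 : 0 < x := by linarith
  have hgx : 0 ≤ log x / x ^ a := div_nonneg (log_nonneg (by linarith)) (by positivity)
  have hg2 : 0 ≤ log 2 / 2 ^ a := div_nonneg (log_nonneg one_le_two) (by positivity)
  have hpow : (log x / x ^ a) ^ k ≤ u ^ 3 * (log 2 / 2 ^ a) ^ k :=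
    calc (log x / x ^ a) ^ k ≤ (u * (log 2 / 2 ^ a)) ^ k := pow_le_pow_left₀ hgx h k
      _ = u ^ k * (log 2 / 2 ^ a) ^ k := mul_pow _ _ _
      _ ≤ u ^ 3 * (log 2 / 2 ^ a) ^ k :=
        mul_le_mul_of_nonneg_right (pow_le_pow_of_le_one hu0 hu1 hk) (by positivity)
  rw [log_pow_mul_rpow_neg_eq hx0 a, log_pow_mul_rpow_neg_eq two_pos a]
  calc (log x / x ^ a) ^ k * x ^ (-(σ - a * k))
      ≤ (u ^ 3 * (log 2 / 2 ^ a) ^ k) * (2 ^ (-(σ - a * k)) * (4 / x ^ 2)) :=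
        mul_le_mul hpow (rpow_neg_le_four_div_sq hx (by linarith)) (by positivity) (by positivity)
    _ = _ := by ring

theorem tsum_nat_add_le_of_le_div_sq {b : ℕ → ℝ} {C : ℝ} {m : ℕ} (hm : m ≠ 0)
    (hb0 : ∀ n, 0 ≤ b n) (hb : ∀ n, m < n → b n ≤ C / (n : ℝ) ^ 2) :
    ∑' n, b (n + (m + 1)) ≤ C / m := by
  have hC : 0 ≤ C := by
    have := mul_nonneg ((hb0 _).trans (hb (m + 1) (by omega))) (sq_nonneg ((m + 1 : ℕ) : ℝ))
    rwa [div_mul_cancel₀ _ (by positivity)] at this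
  refine tsum_le_of_sum_range_le (fun n => hb0 _) fun N => ?_
  calc ∑ n ∈ range N, b (n + (m + 1))
      ≤ ∑ n ∈ range N, C * (((n + (m + 1) : ℕ) : ℝ) ^ 2)⁻¹ :=
        sum_le_sum fun n _ => (hb _ (by omega)).trans_eq (div_eq_mul_inv _ _)
    _ = C * ∑ i ∈ Ioc m (m + N), ((i : ℝ) ^ 2)⁻¹ := by
        rw [← mul_sum, range_eq_Ico, sum_Ico_add' (fun j : ℕ => ((j : ℝ) ^ 2)⁻¹), zero_add,
          ← add_assoc, add_comm N m, Ico_add_one_add_one_eq_Ioc]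
    _ ≤ C * ((m : ℝ)⁻¹ - ((m + N : ℕ) : ℝ)⁻¹) := by
        gcongr; exact sum_Ioc_inv_sq_le_sub hm (by omega)
    _ ≤ C / m := by
        rw [div_eq_mul_inv]; gcongr; exact sub_le_self _ (by positivity)

theorem tsum_ne_zero_of_tsum_norm_lt {E : Type*} [NormedAddCommGroup E] [CompleteSpace E]
    {a : ℕ → E} {m : ℕ} (ha : Summable fun n => ‖a n‖) (hlow : ∀ n < m, a n = 0)
    (hdom : ∑' n, ‖a (n + (m + 1))‖ < ‖a m‖) : ∑' n, a n ≠ 0 := by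
  rw [← ha.of_norm.sum_add_tsum_nat_add (m + 1), sum_range_succ,
    sum_eq_zero fun n hn => hlow n (mem_range.1 hn), zero_add]
  intro h0
  have : ‖a m‖ ≤ ∑' n, ‖a (n + (m + 1))‖ :=
    calc ‖a m‖ = ‖∑' n, a (n + (m + 1))‖ := by rw [eq_neg_of_add_eq_zero_left h0, norm_neg]
      _ ≤ ∑' n, ‖a (n + (m + 1))‖ := norm_tsum_le_tsum_norm ((summable_nat_add_iff _).2 ha)
  exact hdom.not_ge this

theorem LSeries.logMul_iterate_one_apply (k n : ℕ) :
    (logMul^[k] (1 : ℕ → ℂ)) n = Complex.log n ^ k := by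
  induction k with
  | zero => simp
  | succ k ih => rw [Function.iterate_succ_apply', logMul, ih, pow_succ, mul_comm]

theorem LSeries.norm_term_logMul_iterate_one (k : ℕ) (s : ℂ) {n : ℕ} (hn : n ≠ 0) :
    ‖term (logMul^[k] 1) s n‖ = log n ^ k * (n : ℝ) ^ (-s.re) := by
  rw [term_of_ne_zero hn, logMul_iterate_one_apply, norm_div, norm_pow, ← Complex.natCast_log,
    Complex.norm_real, norm_of_nonneg (log_natCast_nonneg n),
    Complex.norm_natCast_cpow_of_pos (Nat.pos_of_ne_zero hn), rpow_neg (Nat.cast_nonneg n),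
    div_eq_mul_inv]

theorem iteratedDeriv_riemannZeta (k : ℕ) {s : ℂ} (hs : 1 < s.re) :
    iteratedDeriv k riemannZeta s = (-1) ^ k * LSeries (logMul^[k] 1) s := by
  have hζ : Set.EqOn riemannZeta (LSeries 1) {z | 1 < z.re} :=
    fun z hz => (LSeries_one_eq_riemannZeta hz).symm
  rw [hζ.iteratedDeriv_of_isOpen (isOpen_lt continuous_const Complex.continuous_re) k hs]
  exact LSeries_iteratedDeriv k (by rw [abscissaOfAbsConv_one]; exact_mod_cast hs)

theorem q_two_eq : q 2 = log (log 2 / log 3) / log (2 / 3) := by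
  norm_num [q]

theorem log_two_div_log_three_le : log 2 / log 3 ≤ 12 / 19 := by
  have h3 : 0 < log 3 := log_pos (by norm_num)
  rw [div_le_div_iff₀ h3 (by norm_num), ← sub_nonneg]
  have : log ((2 : ℝ) ^ 19) ≤ log ((3 : ℝ) ^ 12) := log_le_log (by norm_num) (by norm_num)
  rw [log_pow, log_pow] at this
  push_cast at this
  linarith

theorem two_thirds_rpow_q_two : (2 / 3 : ℝ) ^ q 2 = log 2 / log 3 := by
  have hq : log (2 / 3) * q 2 = log (log 2 / log 3) := by
    rw [q_two_eq, mul_div_cancel₀]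
    exact (log_neg (by norm_num) (by norm_num)).ne
  rw [rpow_def_of_pos (by norm_num), hq, exp_log]
  exact div_pos (log_pos (by norm_num)) (log_pos (by norm_num))

theorem nine_eighths_le_q_two : 9 / 8 ≤ q 2 := by
  have h23 : log (2 / 3) < 0 := log_neg (by norm_num) (by norm_num)
  have hr : 0 < log 2 / log 3 := div_pos (log_pos (by norm_num)) (log_pos (by norm_num))
  rw [q_two_eq, le_div_iff_of_neg h23]
  have : (log 2 / log 3) ^ 8 ≤ (2 / 3 : ℝ) ^ 9 :=
    (pow_le_pow_left₀ hr.le log_two_div_log_three_le 8).trans (by norm_num)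
  have := log_le_log (pow_pos hr 8) this
  rw [log_pow, log_pow] at this
  push_cast at this
  linarith

theorem le_two_rpow_q_two : 2.174 ≤ (2 : ℝ) ^ q 2 := by
  refine le_trans ?_ (rpow_le_rpow_of_exponent_le one_le_two nine_eighths_le_q_two)
  rw [← pow_le_pow_iff_left₀ (by norm_num) (by positivity) (by norm_num : 8 ≠ 0),
    ← rpow_mul_natCast zero_le_two]
  norm_num

theorem one_lt_of_q_two_mul_add_two_le {k : ℕ} {σ : ℝ} (h : q 2 * k + 2 ≤ σ) : 1 < σ := by
  have := mul_nonneg (le_trans (by norm_num) nine_eighths_le_q_two) k.cast_nonneg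
  linarith

theorem three_rpow_q_two : (3 : ℝ) ^ q 2 = 2 ^ q 2 * (log 3 / log 2) := by
  have h := two_thirds_rpow_q_two
  have h3 : 0 < (3 : ℝ) ^ q 2 := by positivity
  have hl2 : 0 < log 2 := log_pos one_lt_two
  have hl3 : 0 < log 3 := log_pos (by norm_num)
  rw [div_rpow (by norm_num) (by norm_num), div_eq_div_iff h3.ne' hl3.ne'] at h
  field_simp
  linarith

namespace VermaKaur

noncomputable def g (x : ℝ) : ℝ := log x / x ^ q 2

theorem g_antitoneOn : AntitoneOn g (Set.Ici 3) := by
  have hq : 1 ≤ q 2 := le_trans (by norm_num) nine_eighths_le_q_two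
  refine (log_div_self_rpow_antitoneOn (by linarith)).mono fun x (hx : 3 ≤ x) => ?_
  calc exp (q 2)⁻¹ ≤ exp 1 := exp_le_exp.2 (inv_le_one_of_one_le₀ hq)
    _ ≤ 3 := exp_one_lt_d9.le.trans (by norm_num)
    _ ≤ x := hx

theorem g_three : g 3 = g 2 := by
  have hl2 : 0 < log 2 := log_pos one_lt_two
  have hl3 : 0 < log 3 := log_pos (by norm_num)
  rw [g, g, three_rpow_q_two]
  field_simp

theorem g_two_mul {x : ℝ} (hx : 0 < x) : g (2 * x) = (log 2 + log x) / (2 ^ q 2 * x ^ q 2) := by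
  rw [g, log_mul two_ne_zero hx.ne', mul_rpow zero_le_two hx.le]

theorem g_four_le : g 4 ≤ 0.92 * g 2 := by
  have hT := le_two_rpow_q_two
  have hl2 : 0 < log 2 := log_pos one_lt_two
  rw [show (4 : ℝ) = 2 * 2 by norm_num, g_two_mul two_pos, g, div_le_iff₀ (by positivity)]
  field_simp
  nlinarith

theorem g_six_le : g 6 ≤ 0.751 * g 2 := by
  have hT := le_two_rpow_q_two
  have hl2 : 0 < log 2 := log_pos one_lt_two
  have hl3 : 0 < log 3 := log_pos (by norm_num)
  have h23 := log_two_div_log_three_le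
  rw [div_le_iff₀ hl3] at h23
  rw [show (6 : ℝ) = 2 * 3 by norm_num, g_two_mul three_pos, three_rpow_q_two, g,
    div_le_iff₀ (by positivity)]
  field_simp
  nlinarith

theorem g_eight_le : g 8 ≤ 0.635 * g 2 := by
  have hT := le_two_rpow_q_two
  have hl2 : 0 < log 2 := log_pos one_lt_two
  rw [show (8 : ℝ) = 2 * (2 * 2) by norm_num, g_two_mul (by norm_num),
    log_mul two_ne_zero two_ne_zero, mul_rpow zero_le_two zero_le_two, g,
    div_le_iff₀ (by positivity)]
  field_simp
  nlinarith

theorem norm_term_le {k : ℕ} (hk : 3 ≤ k) {s : ℂ} (hs : q 2 * k + 2 ≤ s.re) {n : ℕ}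
    (hn : 3 ≤ n) {u : ℝ} (hu0 : 0 ≤ u) (hu1 : u ≤ 1) (hg : g n ≤ u * g 2) :
    ‖term (logMul^[k] 1) s n‖ ≤ u ^ 3 * (4 / (n : ℝ) ^ 2) * ‖term (logMul^[k] 1) s 2‖ := by
  rw [norm_term_logMul_iterate_one k s (by omega), norm_term_logMul_iterate_one k s two_ne_zero,
    Nat.cast_ofNat]
  exact log_pow_mul_rpow_neg_le hk hs (by exact_mod_cast (by omega : 2 ≤ n)) hu0 hu1 hg

theorem LSeries_logMul_iterate_one_ne_zero {k : ℕ} (hk : 3 ≤ k) {s : ℂ}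
    (hs : q 2 * k + 2 ≤ s.re) : LSeries (logMul^[k] 1) s ≠ 0 := by
  set a := term (logMul^[k] 1) s
  have ha : Summable fun n => ‖a n‖ :=
    (LSeriesSummable_of_abscissaOfAbsConv_lt_re (by
      rw [absicssaOfAbsConv_logPowMul, abscissaOfAbsConv_one]
      exact_mod_cast one_lt_of_q_two_mul_add_two_le hs)).norm
  have hA : 0 < ‖a 2‖ := by
    rw [norm_term_logMul_iterate_one k s two_ne_zero]
    have : 0 < log 2 := log_pos (by norm_num)
    positivity
  have hb (n : ℕ) (hn : 3 ≤ n) {u : ℝ} (hu : u ∈ Set.Icc (0 : ℝ) 1) {m : ℝ} (hm : 3 ≤ m)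
      (hmn : m ≤ n) (hg : g m ≤ u * g 2) : ‖a n‖ ≤ u ^ 3 * (4 / (n : ℝ) ^ 2) * ‖a 2‖ :=
    norm_term_le hk hs hn hu.1 hu.2 ((g_antitoneOn hm (hm.trans hmn) hmn).trans hg)
  refine tsum_ne_zero_of_tsum_norm_lt (m := 2) ha (fun n hn => ?_) ?_
  · interval_cases n
    · exact term_zero _ _
    · simp [term_of_ne_zero, logMul_iterate_one_apply, zero_pow (by omega : k ≠ 0)]
  have htail : ∑' n, ‖a (n + 5 + 3)‖ ≤ 0.635 ^ 3 * 4 * ‖a 2‖ / 7 :=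
    tsum_nat_add_le_of_le_div_sq (m := 7) (by norm_num) (fun _ => norm_nonneg _) fun n hn => by
      refine (hb n (by omega) (by norm_num) (m := 8) (by norm_num) (by exact_mod_cast hn)
        g_eight_le).trans_eq ?_
      ring
  rw [← ((summable_nat_add_iff 3).2 ha).sum_add_tsum_nat_add 5]
  have h3 := hb 3 le_rfl (u := 1) (by norm_num) le_rfl le_rfl (by rw [one_mul, g_three])
  have h4 := hb 4 (by norm_num) (by norm_num) (m := 4) (by norm_num) (by norm_num) g_four_le
  have h5 := hb 5 (by norm_num) (by norm_num) (m := 4) (by norm_num) (by norm_num) g_four_le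
  have h6 := hb 6 (by norm_num) (by norm_num) (m := 6) (by norm_num) (by norm_num) g_six_le
  have h7 := hb 7 (by norm_num) (by norm_num) (m := 6) (by norm_num) (by norm_num) g_six_le
  simp only [sum_range_succ, sum_range_zero, zero_add, Nat.reduceAdd]
  norm_num at h3 h4 h5 h6 h7 htail
  linarith

end VermaKaur

/-- (Verma–Kaur) For every integer `k ≥ 3` and every complex `s` with
`Re s ≥ q 2 * k + 2`, the `k`-th derivative of the Riemann zeta function does not vanish
at `s`. -/
theorem zeta_deriv_ne_zero_verma_kaur (k : ℕ) (hk : 3 ≤ k) (s : ℂ)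
    (h : q 2 * k + 2 ≤ s.re) :
    iteratedDeriv k riemannZeta s ≠ 0 := by
  rw [iteratedDeriv_riemannZeta k (one_lt_of_q_two_mul_add_two_le h)]
  exact mul_ne_zero (pow_ne_zero _ (by norm_num))
    (VermaKaur.LSeries_logMul_iterate_one_ne_zero hk h)
end

section
/- For every integer M with 4 ≤ M ≤ 10, every positive integer k, and every complex number s with q_M·k + (M+1)·log 3 ≤ Re(s) ≤ q_{M−1}·k − M·log 3, the k-th derivative of the Riemann zeta function does not vanish at s, i.e. iteratedDeriv k riemannZeta s ≠ 0. -/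
open Real Finset

theorem tsum_ne_zero_of_norm_le_mul {ι E : Type*} [NormedAddCommGroup E] [DecidableEq ι]
    {f : ι → E} {w : ι → ℝ} {m : ι} (hf : Summable f) (hfm : f m ≠ 0) (hw : Summable w)
    (hw1 : ∑' i, w i < 1) (hwm : 0 ≤ w m) (hle : ∀ i, i ≠ m → ‖f i‖ ≤ w i * ‖f m‖) :
    ∑' i, f i ≠ 0 := by
  intro h0
  have hfm' : f m = -∑' i, if i = m then 0 else f i := by
    rw [eq_neg_iff_add_eq_zero, ← hf.tsum_eq_add_tsum_ite, h0]
  have hrest : ‖∑' i, if i = m then 0 else f i‖ ≤ (∑' i, w i) * ‖f m‖ := by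
    refine tsum_of_norm_bounded (hw.hasSum.mul_right ‖f m‖) fun i ↦ ?_
    split_ifs with hi
    · simpa [hi] using mul_nonneg hwm (norm_nonneg _)
    · exact hle i hi
  rw [← norm_neg, ← hfm'] at hrest
  exact (hrest.trans_lt (mul_lt_of_lt_one_left (norm_pos_iff.2 hfm) hw1)).false

section DirichletSeries

lemma logMul_iterate_one (k : ℕ) :
    LSeries.logMul^[k] (1 : ℕ → ℂ) = fun n : ℕ ↦ Complex.log n ^ k := by
  induction k with
  | zero => ext n; simp
  | succ k ih =>
    ext n
    rw [Function.iterate_succ_apply', ih, pow_succ']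

lemma abscissaOfAbsConv_one_lt_re {s : ℂ} (hs : 1 < s.re) :
    LSeries.abscissaOfAbsConv 1 < s.re := by
  rw [LSeries.abscissaOfAbsConv_one]
  exact_mod_cast hs

lemma iteratedDeriv_riemannZeta_eq_LSeries (k : ℕ) {s : ℂ} (hs : 1 < s.re) :
    iteratedDeriv k riemannZeta s = (-1) ^ k * LSeries (fun n : ℕ ↦ Complex.log n ^ k) s := by
  have hζ : LSeries 1 =ᶠ[nhds s] riemannZeta := by
    filter_upwards [Complex.continuous_re.isOpen_preimage _ isOpen_Ioi |>.mem_nhds hs]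
      with z hz using LSeries_one_eq_riemannZeta hz
  rw [← hζ.iteratedDeriv_eq, LSeries_iteratedDeriv k (abscissaOfAbsConv_one_lt_re hs),
    logMul_iterate_one]

lemma LSeriesSummable_log_pow (k : ℕ) {s : ℂ} (hs : 1 < s.re) :
    LSeriesSummable (fun n : ℕ ↦ Complex.log n ^ k) s := by
  rw [← logMul_iterate_one]
  refine LSeriesSummable_of_abscissaOfAbsConv_lt_re ?_
  rw [LSeries.absicssaOfAbsConv_logPowMul]
  exact abscissaOfAbsConv_one_lt_re hs

lemma norm_term_log_pow (k : ℕ) (s : ℂ) {n : ℕ} (hn : n ≠ 0) :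
    ‖LSeries.term (fun n : ℕ ↦ Complex.log n ^ k) s n‖ = log n ^ k / n ^ s.re := by
  rw [LSeries.norm_term_eq, if_neg hn, norm_pow, ← Complex.ofReal_natCast,
    ← Complex.ofReal_log n.cast_nonneg, Complex.norm_real, norm_of_nonneg (log_natCast_nonneg n)]

end DirichletSeries

section Slopes

lemma log_pow_div_rpow_eq {x y : ℝ} (hx : 1 < x) (hy : 1 < y) (k : ℕ) (σ : ℝ) :
    log x ^ k / x ^ σ = log y ^ k / y ^ σ * (x / y) ^ (k * slope log (log y) (log x) - σ) := by
  rcases eq_or_ne x y with rfl | hxy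
  · simp [div_self (by positivity : x ≠ 0)]
  have hlog : log x - log y ≠ 0 := sub_ne_zero.2 fun h ↦
    hxy (log_injOn_pos (Set.mem_Ioi.2 (by linarith)) (Set.mem_Ioi.2 (by linarith)) h)
  have hexp : ∀ z, 1 < z → log z ^ k / z ^ σ = exp (k * log (log z) - σ * log z) := fun z hz ↦ by
    rw [exp_sub, ← log_pow, exp_log (pow_pos (log_pos hz) k), rpow_def_of_pos (by linarith),
      mul_comm σ]
  rw [hexp x hx, hexp y hy, rpow_def_of_pos (div_pos (by linarith) (by linarith)),
    log_div (by positivity) (by positivity), slope_def_field, ← exp_add]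
  congr 1
  field_simp
  ring

lemma log_pow_div_rpow_le_of_lt {x y a σ : ℝ} (k : ℕ) (hx : 1 < x) (hxy : x < y)
    (ha : a ≤ k * slope log (log y) (log x) - σ) :
    log x ^ k / x ^ σ ≤ log y ^ k / y ^ σ * (x / y) ^ a := by
  have hy : 0 < y := by linarith
  rw [log_pow_div_rpow_eq hx (hx.trans hxy)]
  refine mul_le_mul_of_nonneg_left ?_
    (div_nonneg (pow_nonneg (log_nonneg (hx.trans hxy).le) k) (rpow_nonneg hy.le σ))
  exact rpow_le_rpow_of_exponent_ge (div_pos (by linarith) hy) ((div_le_one hy).2 hxy.le) ha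

lemma log_pow_div_rpow_le_of_gt {x y a σ : ℝ} (k : ℕ) (hy : 1 < y) (hyx : y < x)
    (ha : k * slope log (log y) (log x) - σ ≤ -a) :
    log x ^ k / x ^ σ ≤ log y ^ k / y ^ σ * (y / x) ^ a := by
  rw [log_pow_div_rpow_eq (hy.trans hyx) hy]
  refine mul_le_mul_of_nonneg_left ?_
    (div_nonneg (pow_nonneg (log_nonneg hy.le) k) (rpow_nonneg (by linarith) σ))
  rw [← inv_div x y, ← rpow_neg_eq_inv_rpow]
  exact rpow_le_rpow_of_exponent_le ((one_le_div (by linarith)).2 hyx.le) ha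

lemma q_eq_slope {M : ℕ} (hM : 2 ≤ M) : q M = slope log (log M) (log (M + 1)) := by
  have hM' : (1 : ℝ) < M := by exact_mod_cast hM
  rw [q, slope_def_field, log_div (log_pos hM').ne' (log_pos (by linarith)).ne',
    log_div (by positivity) (by positivity), ← neg_sub, ← neg_sub (log (M + 1) : ℝ),
    neg_div_neg_eq]

lemma q_nonneg (M : ℕ) : 0 ≤ q M := by
  have hM : log M ≤ log (M + 1) := by
    rcases M.eq_zero_or_pos with rfl | hM
    · simp
    · exact log_le_log (by positivity) (by linarith)
  have hM1 : 0 ≤ log ((M : ℝ) + 1) := log_nonneg (by simp)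
  exact div_nonneg_of_nonpos
    (log_nonpos (div_nonneg (log_natCast_nonneg M) hM1) (div_le_one_of_le₀ hM hM1))
    (log_nonpos (by positivity) (div_le_one_of_le₀ (by linarith) (by positivity)))

lemma q_sub_one_le_slope {M n : ℕ} (hn : 2 ≤ n) (hnM : n < M) :
    q (M - 1) ≤ slope log (log M) (log n) := by
  have hcast : ((M - 1 : ℕ) : ℝ) + 1 = M := by rw [Nat.cast_sub (by omega)]; ring
  have hn' : (1 : ℝ) < n := by exact_mod_cast hn
  have hnM' : (n : ℝ) ≤ (M - 1 : ℕ) := by exact_mod_cast (by omega : n ≤ M - 1)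
  rw [q_eq_slope (by omega), hcast, slope_comm]
  exact strictConcaveOn_log_Ioi.concaveOn.slope_anti (log_pos (by linarith))
    ⟨log_pos hn', (log_lt_log (by linarith) (by linarith)).ne⟩
    ⟨log_pos (by linarith), (log_lt_log (by linarith) (by linarith)).ne⟩
    (log_le_log (by linarith) hnM')

lemma slope_le_q {M n : ℕ} (hM : 2 ≤ M) (hMn : M < n) :
    slope log (log M) (log n) ≤ q M := by
  have hM' : (1 : ℝ) < M := by exact_mod_cast hM
  have hMn' : (M : ℝ) + 1 ≤ n := by exact_mod_cast hMn
  rw [q_eq_slope hM]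
  exact strictConcaveOn_log_Ioi.concaveOn.slope_anti (log_pos hM')
    ⟨log_pos (by linarith), (log_lt_log (by linarith) (by linarith)).ne'⟩
    ⟨log_pos (by linarith), (log_lt_log (by linarith) (by linarith)).ne'⟩
    (log_le_log (by linarith) hMn')

end Slopes

section Weights

noncomputable def peakWeight (M : ℕ) (a b : ℝ) (n : ℕ) : ℝ :=
  if n < M then ((n : ℝ) / M) ^ a else if M < n then ((M : ℝ) / n) ^ b else 0

/-- A rational bound for `peakWeight M (M * log 3) ((M + 1) * log 3)` when `M ≤ 10`: lower `log 3`
to `12 / 11`, so the exponents become `M + M / 11` and `M + 1 + (M + 1) / 11`, and bound `x ^ θ`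
for the fractional part `θ ≤ 1` by Bernoulli's inequality `x ^ θ ≤ 1 + θ (x - 1)`. -/
noncomputable def peakWeightUpper (M n : ℕ) : ℝ :=
  if n < M then ((n : ℝ) / M) ^ M * (1 + M / 11 * (n / M - 1))
  else if M < n then ((M : ℝ) / n) ^ (M + 1) * (1 + (M + 1) / 11 * (M / n - 1))
  else 0

lemma peakWeight_nonneg (M : ℕ) (a b : ℝ) (n : ℕ) : 0 ≤ peakWeight M a b n := by
  unfold peakWeight
  split_ifs <;> positivity

lemma rpow_natCast_add_le {x θ : ℝ} (m : ℕ) (hx : 0 ≤ x) (hθ₀ : 0 ≤ θ) (hθ₁ : θ ≤ 1) :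
    x ^ (m + θ) ≤ x ^ m * (1 + θ * (x - 1)) := by
  rw [rpow_add_of_nonneg hx m.cast_nonneg hθ₀, rpow_natCast]
  gcongr
  simpa using rpow_one_add_le_one_add_mul_self (s := x - 1) (by linarith) hθ₀ hθ₁

lemma peakWeight_le_peakWeightUpper {M : ℕ} (hM : M ≤ 10) (n : ℕ) :
    peakWeight M (M * log 3) ((M + 1) * log 3) n ≤ peakWeightUpper M n := by
  have hlog3 : (12 / 11 : ℝ) ≤ log 3 := by linarith [log_three_gt_d9]
  have hM' : (M : ℝ) ≤ 10 := by exact_mod_cast hM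
  unfold peakWeight peakWeightUpper
  split_ifs with hnM hMn
  · have hx : (n : ℝ) / M ≤ 1 := div_le_one_of_le₀ (by exact_mod_cast hnM.le) (by positivity)
    calc ((n : ℝ) / M) ^ (M * log 3) ≤ ((n : ℝ) / M) ^ ((M : ℕ) + (M : ℝ) / 11) :=
          rpow_le_rpow_of_exponent_ge' (by positivity) hx (by positivity) (by nlinarith)
      _ ≤ _ := rpow_natCast_add_le M (by positivity) (by positivity) (by linarith)
  · have hx : (M : ℝ) / n ≤ 1 := div_le_one_of_le₀ (by exact_mod_cast hMn.le) (by positivity)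
    calc ((M : ℝ) / n) ^ ((M + 1) * log 3)
        ≤ ((M : ℝ) / n) ^ (((M + 1 : ℕ) : ℝ) + ((M : ℝ) + 1) / 11) :=
          rpow_le_rpow_of_exponent_ge' (by positivity) hx (by positivity) (by push_cast; nlinarith)
      _ ≤ _ := rpow_natCast_add_le (M + 1) (by positivity) (by positivity) (by linarith)
  · rfl

lemma peakWeightUpper_le_of_three_mul_le {M n : ℕ} (hM : 1 ≤ M) (hn : 3 * M ≤ n) :
    peakWeightUpper M n ≤ M ^ 2 / 3 ^ (M - 1) * ((n : ℝ) ^ 2)⁻¹ := by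
  have hMn : M < n := by omega
  have hn' : (3 * M : ℝ) ≤ n := by exact_mod_cast hn
  have hM' : (1 : ℝ) ≤ M := by exact_mod_cast hM
  have hx₀ : 0 ≤ (M : ℝ) / n := by positivity
  have hx₁ : (M : ℝ) / n ≤ 1 / 3 := by
    rw [div_le_iff₀ (by linarith)]
    linarith
  rw [peakWeightUpper, if_neg (by omega), if_pos hMn]
  calc ((M : ℝ) / n) ^ (M + 1) * (1 + (M + 1) / 11 * (M / n - 1))
      ≤ ((M : ℝ) / n) ^ (M - 1) * ((M : ℝ) / n) ^ 2 := by
        rw [← pow_add, show M - 1 + 2 = M + 1 by omega]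
        refine mul_le_of_le_one_right (by positivity) ?_
        nlinarith
    _ ≤ (1 / 3) ^ (M - 1) * ((M : ℝ) / n) ^ 2 := by gcongr
    _ = M ^ 2 / 3 ^ (M - 1) * ((n : ℝ) ^ 2)⁻¹ := by rw [one_div_pow]; field_simp

lemma sum_Ico_inv_sq_le (N K : ℕ) (hN : 1 ≤ N) :
    ∑ n ∈ Ico N K, ((n : ℝ) ^ 2)⁻¹ ≤ 2 / N := by
  calc ∑ n ∈ Ico N K, ((n : ℝ) ^ 2)⁻¹ ≤ ∑ n ∈ Ioo (N - 1) K, ((n : ℝ) ^ 2)⁻¹ :=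
        sum_le_sum_of_subset_of_nonneg (fun n hn ↦ by simp at hn ⊢; omega)
          fun _ _ _ ↦ by positivity
    _ ≤ 2 / ((N - 1 : ℕ) + 1) := sum_Ioo_inv_sq_le _ _
    _ = 2 / N := by rw [Nat.cast_sub hN]; ring_nf

lemma sum_range_peakWeight_le {M : ℕ} (hM₁ : 1 ≤ M) (hM₂ : M ≤ 10) (K : ℕ) :
    ∑ n ∈ range K, peakWeight M (M * log 3) ((M + 1) * log 3) n ≤
      ∑ n ∈ range (3 * M), peakWeightUpper M n + 2 * M / 3 ^ M := by
  set w := peakWeight M (M * log 3) ((M + 1) * log 3)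
  have hK : 3 * M ≤ max K (3 * M) := le_max_right _ _
  have htail : ∑ n ∈ Ico (3 * M) (max K (3 * M)), w n ≤ 2 * M / 3 ^ M := by
    calc ∑ n ∈ Ico (3 * M) (max K (3 * M)), w n
        ≤ ∑ n ∈ Ico (3 * M) (max K (3 * M)), M ^ 2 / 3 ^ (M - 1) * ((n : ℝ) ^ 2)⁻¹ :=
          sum_le_sum fun n hn ↦ (peakWeight_le_peakWeightUpper hM₂ n).trans
            (peakWeightUpper_le_of_three_mul_le hM₁ (mem_Ico.1 hn).1)
      _ ≤ M ^ 2 / 3 ^ (M - 1) * (2 / (3 * M : ℕ)) := by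
          rw [← mul_sum]
          gcongr
          exact sum_Ico_inv_sq_le _ _ (by omega)
      _ = 2 * M / 3 ^ M := by
          rw [← pow_sub_one_mul (by omega : M ≠ 0)]
          push_cast
          field_simp
  calc ∑ n ∈ range K, w n ≤ ∑ n ∈ range (max K (3 * M)), w n :=
        sum_le_sum_of_subset_of_nonneg (range_subset_range.2 (le_max_left _ _))
          fun n _ _ ↦ peakWeight_nonneg _ _ _ n
    _ = ∑ n ∈ range (3 * M), w n + ∑ n ∈ Ico (3 * M) (max K (3 * M)), w n :=
        (sum_range_add_sum_Ico _ hK).symm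
    _ ≤ _ := add_le_add (sum_le_sum fun n _ ↦ peakWeight_le_peakWeightUpper hM₂ n) htail

lemma sum_range_peakWeightUpper_add_lt_one {M : ℕ} (hM₁ : 4 ≤ M) (hM₂ : M ≤ 10) :
    ∑ n ∈ range (3 * M), peakWeightUpper M n + 2 * M / 3 ^ M < 1 := by
  interval_cases M <;> norm_num [sum_range_succ, peakWeightUpper]

theorem summable_peakWeight_and_tsum_lt_one {M : ℕ} (hM₁ : 4 ≤ M) (hM₂ : M ≤ 10) :
    Summable (peakWeight M (M * log 3) ((M + 1) * log 3)) ∧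
      ∑' n, peakWeight M (M * log 3) ((M + 1) * log 3) n < 1 := by
  have hpartial := sum_range_peakWeight_le (by omega) hM₂
  have hnonneg := peakWeight_nonneg M (M * log 3) ((M + 1) * log 3)
  exact ⟨summable_of_sum_range_le hnonneg hpartial, (Real.tsum_le_of_sum_range_le hnonneg
    hpartial).trans_lt (sum_range_peakWeightUpper_add_lt_one hM₁ hM₂)⟩

end Weights

lemma log_pow_div_rpow_le_peakWeight_mul {M n k : ℕ} {σ a b : ℝ} (hM : 2 ≤ M) (hn : 2 ≤ n)
    (hnM : n ≠ M) (ha : σ ≤ q (M - 1) * k - a) (hb : q M * k + b ≤ σ) :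
    log n ^ k / n ^ σ ≤ peakWeight M a b n * (log M ^ k / M ^ σ) := by
  rcases hnM.lt_or_gt with hlt | hgt
  · rw [peakWeight, if_pos hlt, mul_comm]
    refine log_pow_div_rpow_le_of_lt k (by exact_mod_cast hn) (by exact_mod_cast hlt) ?_
    have := mul_le_mul_of_nonneg_left (q_sub_one_le_slope hn hlt) k.cast_nonneg
    linarith
  · rw [peakWeight, if_neg (by omega), if_pos hgt, mul_comm]
    refine log_pow_div_rpow_le_of_gt k (by exact_mod_cast hM) (by exact_mod_cast hgt) ?_
    have := mul_le_mul_of_nonneg_left (slope_le_q hM hgt) k.cast_nonneg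
    linarith

lemma norm_term_log_pow_le_peakWeight_mul {M k n : ℕ} {s : ℂ} {a b : ℝ} (hM : 2 ≤ M)
    (hk : k ≠ 0) (hnM : n ≠ M) (ha : s.re ≤ q (M - 1) * k - a) (hb : q M * k + b ≤ s.re) :
    ‖LSeries.term (fun n : ℕ ↦ Complex.log n ^ k) s n‖ ≤
      peakWeight M a b n * ‖LSeries.term (fun n : ℕ ↦ Complex.log n ^ k) s M‖ := by
  rw [norm_term_log_pow k s (by omega : M ≠ 0)]
  rcases lt_or_ge n 2 with hn | hn
  · have hzero : ‖LSeries.term (fun n : ℕ ↦ Complex.log n ^ k) s n‖ = 0 := by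
      interval_cases n <;> simp [hk]
    rw [hzero]
    exact mul_nonneg (peakWeight_nonneg ..)
      (div_nonneg (pow_nonneg (log_natCast_nonneg M) k) (rpow_nonneg M.cast_nonneg _))
  · rw [norm_term_log_pow k s (by omega)]
    exact log_pow_div_rpow_le_peakWeight_mul hM hn hnM ha hb

/-- For every integer `M` with `4 ≤ M ≤ 10`, every positive integer `k`, and every
complex `s` with `q M * k + (M+1) log 3 ≤ Re s ≤ q (M-1) * k - M log 3`, the `k`-th
derivative of the Riemann zeta function does not vanish at `s`. -/
theorem zeta_deriv_ne_zero_M_four_to_ten (M : ℕ) (hM₁ : 4 ≤ M) (hM₂ : M ≤ 10)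
    (k : ℕ) (hk : 1 ≤ k) (s : ℂ)
    (h1 : q M * k + ((M : ℝ) + 1) * Real.log 3 ≤ s.re)
    (h2 : s.re ≤ q (M - 1) * k - (M : ℝ) * Real.log 3) :
    iteratedDeriv k riemannZeta s ≠ 0 := by
  have hM : (1 : ℝ) < M := by exact_mod_cast (by omega : 1 < M)
  have hs : 1 < s.re := by
    have hM5 : (5 : ℝ) ≤ M + 1 := by exact_mod_cast (by omega : 5 ≤ M + 1)
    nlinarith [mul_nonneg (q_nonneg M) k.cast_nonneg, log_three_gt_d9]
  obtain ⟨hw, hw1⟩ := summable_peakWeight_and_tsum_lt_one hM₁ hM₂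
  rw [iteratedDeriv_riemannZeta_eq_LSeries k hs]
  refine mul_ne_zero (pow_ne_zero _ (by norm_num)) (tsum_ne_zero_of_norm_le_mul (m := M)
    (LSeriesSummable_log_pow k hs) ?_ hw hw1 (peakWeight_nonneg ..)
    fun n hn ↦ norm_term_log_pow_le_peakWeight_mul (by omega) (by omega) hn h2 h1)
  rw [← norm_pos_iff, norm_term_log_pow k s (by omega)]
  exact div_pos (pow_pos (log_pos hM) k) (rpow_pos_of_pos (by linarith) _)
end
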